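/- arXiv:1708.06774 — 3 statements merged into one kernel-verified Lean document; each statement's English description precedes it below -/
import Mathlib

section
/- Let (Mᵣ, tᵣ, Oᵣ : Mᵣ → Ωᵣ) and (Mₛ, tₛ, Oₛ : Mₛ → Ωₛ) be two reference frames, both deterministic (via functions f₂ : Ωᵣ → Ωᵣ → ℝ and f₁ : Ωₛ → Ωₛ → ℝ respectively), with Mᵣ and Mₛ nonempty. Then there exists f'' : Ωᵣ → Ωₛ → ℝ such that tₛ mₛ − tᵣ mᵣ = f'' (Oᵣ mᵣ) (Oₛ mₛ) for all mᵣ ∈ Mᵣ and mₛ ∈ Mₛ; i.e. the mixture of the sender's and the receiver's clocks is deterministic. (Claim (ii) in the proof of Lemma 1, Equations (4)–(6).) -/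
/-- Claim (ii) in the proof of Lemma 1 (Equations (4)–(6)): if both the
receiver and the sender RFs are deterministic (and nonempty), then the mixture
of the sender's and the receiver's clocks is deterministic. -/
theorem mixed_clock_deterministic
    {Ωᵣ Ωₛ Mᵣ Mₛ : Type*} [Nonempty Mᵣ] [Nonempty Mₛ]
    (tᵣ : Mᵣ → ℝ) (Oᵣ : Mᵣ → Ωᵣ) (tₛ : Mₛ → ℝ) (Oₛ : Mₛ → Ωₛ)
    (f₂ : Ωᵣ → Ωᵣ → ℝ) (f₁ : Ωₛ → Ωₛ → ℝ)
    (hᵣ : ∀ m₁ m₂ : Mᵣ, tᵣ m₂ - tᵣ m₁ = f₂ (Oᵣ m₁) (Oᵣ m₂))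
    (hₛ : ∀ m₁ m₂ : Mₛ, tₛ m₂ - tₛ m₁ = f₁ (Oₛ m₁) (Oₛ m₂)) :
    ∃ f'' : Ωᵣ → Ωₛ → ℝ,
      ∀ (mᵣ : Mᵣ) (mₛ : Mₛ), tₛ mₛ - tᵣ mᵣ = f'' (Oᵣ mᵣ) (Oₛ mₛ) := by
  obtain ⟨m₀ᵣ⟩ := ‹Nonempty Mᵣ›
  obtain ⟨m₀ₛ⟩ := ‹Nonempty Mₛ›
  refine ⟨fun ωᵣ ωₛ => f₁ (Oₛ m₀ₛ) ωₛ + (tₛ m₀ₛ - tᵣ m₀ᵣ) - f₂ (Oᵣ m₀ᵣ) ωᵣ, ?_⟩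
  intro mᵣ mₛ
  have h1 := hₛ m₀ₛ mₛ
  have h2 := hᵣ m₀ᵣ mᵣ
  dsimp only
  linarith
end

section
/- Let (Mᵣ, tᵣ, Oᵣ : Mᵣ → Ωᵣ) and (Mₛ, tₛ, Oₛ : Mₛ → Ωₛ) be two reference frames, both deterministic, with Mᵣ and Mₛ nonempty. Form the combined reference frame on M = Mᵣ ⊕ Mₛ (disjoint sum) with clock T defined by T (inl m) = tᵣ m and T (inr m) = tₛ m, and observation map Obs : M → Ωᵣ ⊕ Ωₛ defined by Obs (inl m) = inl (Oᵣ m) and Obs (inr m) = inr (Oₛ m). Then the combined RF is deterministic: there exists F : (Ωᵣ ⊕ Ωₛ) → (Ωᵣ ⊕ Ωₛ) → ℝ such that T m₂ − T m₁ = F (Obs m₁) (Obs m₂) for all m₁, m₂ ∈ M. (Lemma 1: a deterministic RF remains deterministic after communicating with another deterministic RF, condition (2) of Definition 2.) -/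
/-- Lemma 1 (condition (2) of Definition 2): a deterministic RF remains
deterministic after communicating with another deterministic RF; the combined
RF on the disjoint sum of the two moment types is deterministic. -/
theorem combined_RF_deterministic
    {Ωᵣ Ωₛ Mᵣ Mₛ : Type*} [Nonempty Mᵣ] [Nonempty Mₛ]
    (tᵣ : Mᵣ → ℝ) (Oᵣ : Mᵣ → Ωᵣ) (tₛ : Mₛ → ℝ) (Oₛ : Mₛ → Ωₛ)
    (hᵣ : ∃ f : Ωᵣ → Ωᵣ → ℝ, ∀ m₁ m₂ : Mᵣ, tᵣ m₂ - tᵣ m₁ = f (Oᵣ m₁) (Oᵣ m₂))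
    (hₛ : ∃ f : Ωₛ → Ωₛ → ℝ, ∀ m₁ m₂ : Mₛ, tₛ m₂ - tₛ m₁ = f (Oₛ m₁) (Oₛ m₂)) :
    ∃ F : (Ωᵣ ⊕ Ωₛ) → (Ωᵣ ⊕ Ωₛ) → ℝ,
      ∀ m₁ m₂ : Mᵣ ⊕ Mₛ,
        Sum.elim tᵣ tₛ m₂ - Sum.elim tᵣ tₛ m₁ =
          F (Sum.elim (fun m => Sum.inl (Oᵣ m)) (fun m => Sum.inr (Oₛ m)) m₁)
            (Sum.elim (fun m => Sum.inl (Oᵣ m)) (fun m => Sum.inr (Oₛ m)) m₂) := by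
  obtain ⟨f, hf⟩ := hᵣ
  obtain ⟨g, hg⟩ := hₛ
  obtain ⟨mr⟩ := ‹Nonempty Mᵣ›
  obtain ⟨ms⟩ := ‹Nonempty Mₛ›
  -- "time" of an observation
  set τr : Ωᵣ → ℝ := fun a => tᵣ mr + f (Oᵣ mr) a with hτr
  set τs : Ωₛ → ℝ := fun a => tₛ ms + g (Oₛ ms) a with hτs
  have hr : ∀ m : Mᵣ, τr (Oᵣ m) = tᵣ m := by
    intro m; simp only [hτr]; have := hf mr m; linarith
  have hs : ∀ m : Mₛ, τs (Oₛ m) = tₛ m := by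
    intro m; simp only [hτs]; have := hg ms m; linarith
  refine ⟨fun a b => (Sum.elim τr τs b) - (Sum.elim τr τs a), ?_⟩
  rintro (m₁ | m₁) (m₂ | m₂) <;> simp [hr, hs]
end

section
/- Let t : E → I → ℝ be a family of execution clocks over a nonempty index type E of executions of a fixed program with opcode set I. Then the following are equivalent: (a) there exists f : I → I → ℝ such that t e j − t e i = f i j for all e ∈ E and all i, j ∈ I (Definition 1 determinism with opcodes as observations); (b) for all e₁, e₂ ∈ E there exists C ∈ ℝ with t e₁ i − t e₂ i = C for all i ∈ I (Definition 3, JavaScript determinism). (Theorem 2: determinism definition equivalence in the context of the JavaScript engine.) -/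
/-- Theorem 2 (determinism definition equivalence in the context of the
JavaScript engine): Definition 1 determinism (with opcodes as observations)
is equivalent to Definition 3 (JavaScript determinism). -/
theorem determinism_definition_equivalence
    {E I : Type*} [Nonempty E] (t : E → I → ℝ) :
    (∃ f : I → I → ℝ, ∀ (e : E) (i j : I), t e j - t e i = f i j) ↔
    (∀ e₁ e₂ : E, ∃ C : ℝ, ∀ i : I, t e₁ i - t e₂ i = C) := by
  constructor
  · rintro ⟨f, hf⟩ e₁ e₂
    by_cases hI : Nonempty I
    · obtain ⟨i₀⟩ := hI
      refine ⟨t e₁ i₀ - t e₂ i₀, fun i => ?_⟩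
      have h1 := hf e₁ i₀ i
      have h2 := hf e₂ i₀ i
      linarith
    · exact ⟨0, fun i => absurd ⟨i⟩ hI⟩
  · intro h
    obtain ⟨e₀⟩ := ‹Nonempty E›
    refine ⟨fun i j => t e₀ j - t e₀ i, fun e i j => ?_⟩
    obtain ⟨C, hC⟩ := h e e₀
    have h1 := hC i
    have h2 := hC j
    show t e j - t e i = t e₀ j - t e₀ i
    linarith
end
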